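/- In the setting of the factorization lower bound, assume in addition: Q : [−π,π) → (ℓ²)^M is measurable with rows q_r(λ) ∈ ℓ² (r = 1,…,M) such that Q(λ)P(λ) = I_M for almost every λ, where P(λ) : ℂ^M → ℓ² is P(λ)v = Σ_{u=0}^∞ e^{−iuλ} d(u)v and (Q(λ)x)_r = Σ_k (q_r(λ))_k·x_k. Let S ∈ L²([−π,π); ℂ^M) be the function whose Fourier coefficients are (1/2π)∫ S(λ)e^{−itλ}dλ = s_t for t ≥ 0 and 0 for t < 0, and define h(λ) := A(λ) − Q(λ)ᵀS(λ), where (Q(λ)ᵀv)_k = Σ_{r=1}^M (q_r(λ))_k·v_r. If h takes values in ℓ² with ∫_{−π}^{π} ‖h(λ)‖² dλ < ∞ and h is a negative-frequency function, then (1/2π)·∫_{−π}^{π} ‖ Σ_{u=0}^∞ e^{−iuλ}·d(u)ᵀ(A(λ)−h(λ)) ‖²_{ℂ^M} dλ = Σ_{t=0}^∞ ‖s_t‖²_{ℂ^M}; i.e. h attains the lower bound and is an optimal spectral characteristic, with minimal mean square error Σ_t ‖s_t‖². -/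

import Mathlib

open MeasureTheory
open scoped ENNReal

noncomputable section

/-- The space `ℓ² = ℓ²(ℕ; ℂ)`. -/
abbrev Elltwo : Type := lp (fun _ : ℕ => ℂ) 2

/-- Lebesgue measure restricted to `[-π, π)`. -/
def pmeas : Measure ℝ := volume.restrict (Set.Ico (-Real.pi) Real.pi)

/-- A square-integrable function `h : [-π,π) → ℓ²` is a negative-frequency function if
its Fourier coefficients `∫ h(λ)·e^{-ijλ} dλ` vanish for every integer `j ≥ 0`. -/
def NegFreq (h : ℝ → Elltwo) : Prop :=
  MemLp h 2 pmeas ∧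
  ∀ j : ℤ, 0 ≤ j →
    (∫ l, Complex.exp (-Complex.I * (j : ℂ) * (l : ℂ)) • h l ∂pmeas) = 0

open Complex
open scoped InnerProductSpace

/-!
The sum `Σ_u e^{-iuλ} d(u)ᵀ x` is the pairing of `x` with `P(λ) = Σ_u e^{-iuλ} d(u)`,
i.e. the transpose `P(λ)ᵀ x`. As `Q(λ)P(λ) = I_M` gives `P(λ)ᵀQ(λ)ᵀ = I_M` and `A - h = QᵀS`,
the integrand is `‖S(λ)‖²` almost everywhere. The Fourier coefficients of `S` are `s_t` for
`t ≥ 0` and vanish for `t < 0`, so Parseval's identity, applied coordinatewise on `[-π, π)`,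
gives `(1/2π) ∫ ‖S‖² = Σ_t ‖s_t‖²`.
-/

namespace Elltwo

theorem tsum_mul_eq_inner_star (f g : Elltwo) : ∑' k, f k * g k = ⟪star g, f⟫_ℂ := by
  simp [lp.inner_eq_tsum, lp.star_apply]

theorem tsum_mul_sum_smul_of_leftInverse {ι : Type*} [Fintype ι] [DecidableEq ι]
    {P Q : ι → Elltwo}
    (hQP : ∀ r r', ∑' k, Q r k * P r' k = if r = r' then 1 else 0) (v : ι → ℂ) (r : ι) :
    ∑' k, P r k * (∑ r', v r' • Q r') k = v r := by
  rw [tsum_mul_eq_inner_star, star_sum, sum_inner]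
  simp only [star_smul, inner_smul_left, ← tsum_mul_eq_inner_star]
  simp [mul_comm (P r _), hQP]

theorem tsum_smul_mul_eq_tsum_mul {c : ℕ → ℂ} {F : ℕ → Elltwo}
    (hF : Summable fun u => c u • F u) (x : Elltwo) :
    ∑' u, c u * ∑' k, F u k * x k = ∑' k, (∑' u, c u • F u) k * x k := by
  simp only [tsum_mul_eq_inner_star, ← inner_smul_right]
  exact ((innerSL ℂ (star x)).map_tsum hF).symm

end Elltwo

theorem summable_norm_of_summable_sqrt_sum_sq {ι E : Type*} [Fintype ι]
    [SeminormedAddCommGroup E]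
    {d : ℕ → ι → E} (hd : Summable fun u => Real.sqrt (∑ r, ‖d u r‖ ^ 2)) (r : ι) :
    Summable fun u => ‖d u r‖ :=
  hd.of_nonneg_of_le (fun _ => norm_nonneg _) fun u =>
    Real.le_sqrt_of_sq_le (Finset.single_le_sum (f := fun r => ‖d u r‖ ^ 2)
      (fun _ _ => sq_nonneg _) (Finset.mem_univ r))

theorem norm_cexp_neg_I_mul_mul (x y : ℝ) : ‖cexp (-I * x * y)‖ = 1 := by
  rw [Complex.norm_exp]; simp

theorem summable_cexp_neg_I_mul_smul {E : Type*} [NormedAddCommGroup E] [NormedSpace ℂ E]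
    [CompleteSpace E] {F : ℕ → E} (hF : Summable fun u => ‖F u‖) (l : ℝ) :
    Summable fun u : ℕ => cexp (-I * u * l) • F u :=
  .of_norm <| hF.congr fun u => by
    rw [norm_smul, ← ofReal_natCast, norm_cexp_neg_I_mul_mul, one_mul]

theorem tsum_cexp_mul_tsum_mul_sum_smul_of_leftInverse {ι : Type*} [Fintype ι] [DecidableEq ι]
    {d : ℕ → ι → Elltwo} (hd : ∀ r, Summable fun u => ‖d u r‖) {l : ℝ} {P Q : ι → Elltwo}
    (hP : ∀ r, P r = ∑' u : ℕ, cexp (-I * u * l) • d u r)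
    (hQP : ∀ r r', ∑' k, Q r k * P r' k = if r = r' then 1 else 0) (v : ι → ℂ) (r : ι) :
    ∑' u : ℕ, cexp (-I * u * l) * ∑' k, d u r k * (∑ r', v r' • Q r') k = v r := by
  rw [Elltwo.tsum_smul_mul_eq_tsum_mul (summable_cexp_neg_I_mul_smul (hd r) l), ← hP,
    Elltwo.tsum_mul_sum_smul_of_leftInverse hQP]

theorem hasSum_sq_fourierCoeffOn_natCast {a b : ℝ} (hab : a < b) {f : ℝ → ℂ}
    (hf : MemLp f 2 (volume.restrict (Set.Ioc a b)))
    (hneg : ∀ n : ℤ, n < 0 → fourierCoeffOn hab f n = 0) :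
    HasSum (fun t : ℕ => ‖fourierCoeffOn hab f t‖ ^ 2) ((b - a)⁻¹ • ∫ x in a..b, ‖f x‖ ^ 2) := by
  refine (Nat.cast_injective.hasSum_iff fun n hn => ?_).mpr (hasSum_sq_fourierCoeffOn hab hf)
  have hn' : n < 0 := by
    by_contra! hn0
    exact hn ⟨n.toNat, Int.toNat_of_nonneg hn0⟩
  simp [hneg n hn']

theorem ContinuousLinearMap.fourierCoeffOn_comp {E F : Type*}
    [NormedAddCommGroup E] [NormedSpace ℂ E]
    [CompleteSpace E] [NormedAddCommGroup F] [NormedSpace ℂ F] [CompleteSpace F]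
    (L : E →L[ℂ] F) {a b : ℝ} (hab : a < b) {f : ℝ → E} (hf : IntervalIntegrable f volume a b)
    (n : ℤ) : fourierCoeffOn hab (fun x => L (f x)) n = L (fourierCoeffOn hab f n) := by
  have hint :
      IntervalIntegrable (fun x => fourier (-n) (x : AddCircle (b - a)) • f x) volume a b :=
    hf.continuousOn_smul (by fun_prop)
  rw [fourierCoeffOn_eq_integral, fourierCoeffOn_eq_integral, L.map_smul_of_tower,
    ← L.intervalIntegral_comp_comm hint]
  simp only [map_smul]

theorem EuclideanSpace.hasSum_sq_norm_fourierCoeffOn_natCast {ι : Type*} [Fintype ι] {a b : ℝ}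
    (hab : a < b) {f : ℝ → EuclideanSpace ℂ ι} (hf : MemLp f 2 (volume.restrict (Set.Ioc a b)))
    (hneg : ∀ n : ℤ, n < 0 → fourierCoeffOn hab f n = 0) :
    HasSum (fun t : ℕ => ‖fourierCoeffOn hab f t‖ ^ 2) ((b - a)⁻¹ • ∫ x in a..b, ‖f x‖ ^ 2) := by
  have hcoord (r : ι) : MemLp (fun x => f x r) 2 (volume.restrict (Set.Ioc a b)) :=
    (EuclideanSpace.proj (𝕜 := ℂ) r).comp_memLp' hf
  have hint : IntervalIntegrable f volume a b := by
    rw [intervalIntegrable_iff_integrableOn_Ioc_of_le hab.le]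
    exact hf.integrable one_le_two
  have hcoeff (r : ι) (n : ℤ) :
      fourierCoeffOn hab (fun x => f x r) n = fourierCoeffOn hab f n r :=
    (EuclideanSpace.proj r).fourierCoeffOn_comp hab hint n
  have hsq (r : ι) : IntervalIntegrable (fun x => ‖f x r‖ ^ 2) volume a b := by
    rw [intervalIntegrable_iff_integrableOn_Ioc_of_le hab.le]
    exact (hcoord r).integrable_norm_pow two_ne_zero
  simp only [EuclideanSpace.norm_sq_eq, intervalIntegral.integral_finsetSum fun r _ => hsq r,
    Finset.smul_sum, ← hcoeff]
  exact hasSum_sum fun r _ => hasSum_sq_fourierCoeffOn_natCast hab (hcoord r)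
    fun n hn => by rw [hcoeff, hneg n hn]; rfl

theorem pmeas_eq_restrict_Ioc : pmeas = volume.restrict (Set.Ioc (-Real.pi) Real.pi) :=
  Measure.restrict_congr_set Ico_ae_eq_Ioc

theorem fourierCoeffOn_neg_pi_pi {E : Type*} [NormedAddCommGroup E] [NormedSpace ℂ E]
    (f : ℝ → E) (n : ℤ) :
    fourierCoeffOn (neg_lt_self Real.pi_pos) f n =
      ((2 * Real.pi : ℝ) : ℂ)⁻¹ • ∫ l, cexp (-I * n * l) • f l ∂pmeas := by
  rw [fourierCoeffOn_eq_integral, intervalIntegral.integral_of_le (neg_lt_self Real.pi_pos).le,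
    ← pmeas_eq_restrict_Ioc, sub_neg_eq_add, ← two_mul, one_div, ← ofReal_inv,
    Complex.coe_smul]
  congr 2 with l
  rw [fourier_coe_apply]
  congr 2
  push_cast
  field_simp

theorem factorization_bound_attained_general
    (M : ℕ)
    (d : ℕ → Fin M → Elltwo)
    (hd : Summable fun u : ℕ => Real.sqrt (∑ r : Fin M, ‖d u r‖ ^ 2))
    (A : ℝ → Elltwo)
    (s : ℕ → EuclideanSpace ℂ (Fin M))
    (Q : ℝ → Fin M → Elltwo)
    (P : ℝ → Fin M → Elltwo)
    (hP : ∀ (l : ℝ) (r : Fin M),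
      P l r = ∑' u : ℕ, Complex.exp (-Complex.I * (u : ℂ) * (l : ℂ)) • d u r)
    (hQP : ∀ᵐ l ∂pmeas, ∀ r r' : Fin M,
      (∑' k : ℕ, Q l r k * P l r' k) = if r = r' then 1 else 0)
    (S : ℝ → EuclideanSpace ℂ (Fin M))
    (hSL2 : MemLp S 2 pmeas)
    (hSpos : ∀ t : ℕ,
      ((2 * Real.pi : ℝ) : ℂ)⁻¹ •
        (∫ l, Complex.exp (-Complex.I * (t : ℂ) * (l : ℂ)) • S l ∂pmeas) = s t)
    (hSneg : ∀ t : ℤ, t < 0 →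
      ((2 * Real.pi : ℝ) : ℂ)⁻¹ •
        (∫ l, Complex.exp (-Complex.I * (t : ℂ) * (l : ℂ)) • S l ∂pmeas) = 0)
    (h : ℝ → Elltwo)
    (hh : ∀ (l : ℝ) (k : ℕ), h l k = A l k - ∑ r : Fin M, Q l r k * S l r) :
    ENNReal.ofReal (1 / (2 * Real.pi)) *
        ∫⁻ l, ENNReal.ofReal
          (‖(show EuclideanSpace ℂ (Fin M) from WithLp.toLp 2 fun r : Fin M =>
              ∑' u : ℕ, Complex.exp (-Complex.I * (u : ℂ) * (l : ℂ)) *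
                ∑' k : ℕ, d u r k * (A l - h l) k)‖ ^ 2) ∂pmeas
      = ENNReal.ofReal (∑' t : ℕ, ‖s t‖ ^ 2) := by
  have hresponse : ∀ᵐ l : ℝ ∂pmeas,
      (show EuclideanSpace ℂ (Fin M) from WithLp.toLp 2 fun r =>
        ∑' u : ℕ, cexp (-I * u * (l : ℂ)) * ∑' k, d u r k * (A l - h l) k) = S l := by
    filter_upwards [hQP] with l hQPl
    have hAh : A l - h l = ∑ r', S l r' • Q l r' := by
      ext k
      rw [lp.coeFn_sub, Pi.sub_apply, hh, sub_sub_cancel, lp.coeFn_sum, Finset.sum_apply]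
      simp [mul_comm]
    ext r
    simpa [hAh] using tsum_cexp_mul_tsum_mul_sum_smul_of_leftInverse
      (summable_norm_of_summable_sqrt_sum_sq hd) (hP l) hQPl (S l) r
  have hparseval := EuclideanSpace.hasSum_sq_norm_fourierCoeffOn_natCast
    (neg_lt_self Real.pi_pos) (pmeas_eq_restrict_Ioc ▸ hSL2)
    fun n hn => by rw [fourierCoeffOn_neg_pi_pi, hSneg n hn]
  simp only [fourierCoeffOn_neg_pi_pi, Int.cast_natCast, hSpos] at hparseval
  rw [lintegral_congr_ae (hresponse.mono fun l hl => by rw [hl]),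
    ← ofReal_integral_eq_lintegral_ofReal (hSL2.integrable_norm_pow two_ne_zero)
      (.of_forall fun _ => sq_nonneg _), ← ENNReal.ofReal_mul (by positivity),
    hparseval.tsum_eq,
    intervalIntegral.integral_of_le (neg_lt_self Real.pi_pos).le, ← pmeas_eq_restrict_Ioc]
  congr 1
  ring

theorem factorization_bound_attained
    (M : ℕ) (hM : 1 ≤ M)
    (d : ℕ → Fin M → Elltwo)
    (hd : Summable fun u : ℕ => Real.sqrt (∑ r : Fin M, ‖d u r‖ ^ 2))
    (a : ℕ → Elltwo)
    (ha1 : Summable fun j : ℕ => ‖a j‖)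
    (ha2 : Summable fun j : ℕ => ((j : ℝ) + 1) * ‖a j‖ ^ 2)
    (A : ℝ → Elltwo)
    (hA : ∀ l : ℝ, A l = ∑' j : ℕ, Complex.exp (Complex.I * (j : ℂ) * (l : ℂ)) • a j)
    (s : ℕ → EuclideanSpace ℂ (Fin M))
    (hs : ∀ (t : ℕ) (r : Fin M),
      s t r = ∑' p : ℕ, ∑' k : ℕ, d p r k * a (p + t) k)
    (hssum : Summable fun t : ℕ => ‖s t‖ ^ 2)
    (Q : ℝ → Fin M → Elltwo)
    (hQmeas : ∀ r : Fin M, AEStronglyMeasurable (fun l : ℝ => Q l r) pmeas)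
    (P : ℝ → Fin M → Elltwo)
    (hP : ∀ (l : ℝ) (r : Fin M),
      P l r = ∑' u : ℕ, Complex.exp (-Complex.I * (u : ℂ) * (l : ℂ)) • d u r)
    (hQP : ∀ᵐ l ∂pmeas, ∀ r r' : Fin M,
      (∑' k : ℕ, Q l r k * P l r' k) = if r = r' then 1 else 0)
    (S : ℝ → EuclideanSpace ℂ (Fin M))
    (hSL2 : MemLp S 2 pmeas)
    (hSpos : ∀ t : ℕ,
      ((2 * Real.pi : ℝ) : ℂ)⁻¹ •
        (∫ l, Complex.exp (-Complex.I * (t : ℂ) * (l : ℂ)) • S l ∂pmeas) = s t)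
    (hSneg : ∀ t : ℤ, t < 0 →
      ((2 * Real.pi : ℝ) : ℂ)⁻¹ •
        (∫ l, Complex.exp (-Complex.I * (t : ℂ) * (l : ℂ)) • S l ∂pmeas) = 0)
    (h : ℝ → Elltwo)
    (hh : ∀ (l : ℝ) (k : ℕ), h l k = A l k - ∑ r : Fin M, Q l r k * S l r)
    (hneg : NegFreq h) :
    ENNReal.ofReal (1 / (2 * Real.pi)) *
        ∫⁻ l, ENNReal.ofReal
          (‖(show EuclideanSpace ℂ (Fin M) from WithLp.toLp 2 fun r : Fin M =>
              ∑' u : ℕ, Complex.exp (-Complex.I * (u : ℂ) * (l : ℂ)) *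
                ∑' k : ℕ, d u r k * (A l - h l) k)‖ ^ 2) ∂pmeas
      = ENNReal.ofReal (∑' t : ℕ, ‖s t‖ ^ 2) :=
  factorization_bound_attained_general M d hd A s Q P hP hQP S hSL2 hSpos hSneg h hh
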